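/- In the Kneser graph KG(n,2) with n ≥ 4, the chromatic number is exactly n − 2. -/

import Mathlib

open scoped Classical

/-- The closed segment associated to an unordered pair of points. -/
noncomputable def seg : Sym2 (ℝ × ℝ) → Set (ℝ × ℝ) :=
  Sym2.lift ⟨fun p q => segment ℝ p q, fun p q => segment_symm ℝ p q⟩

lemma seg_nonempty (s : Sym2 (ℝ × ℝ)) : (seg s).Nonempty := by
  induction s using Sym2.ind with
  | _ p q => exact ⟨p, by simp [seg, left_mem_segment]⟩

/-- A point set is in general position if no three (distinct) of its points are collinear. -/
def GenPos (P : Set (ℝ × ℝ)) : Prop :=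
  ∀ a ∈ P, ∀ b ∈ P, ∀ c ∈ P, a ≠ b → a ≠ c → b ≠ c →
    ¬ Collinear ℝ ({a, b, c} : Set (ℝ × ℝ))

/-- A point set is in convex position if every point is a vertex of the convex hull. -/
def ConvexPos (P : Set (ℝ × ℝ)) : Prop :=
  ∀ p ∈ P, p ∉ convexHull ℝ (P \ {p})

/-- Vertices of the disjointness graph: unordered pairs of distinct points of `P`. -/
def SegOn (P : Set (ℝ × ℝ)) : Type :=
  {s : Sym2 (ℝ × ℝ) // (∀ p ∈ s, p ∈ P) ∧ ¬ s.IsDiag}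

/-- The disjointness graph of segments of `P`: segments adjacent iff disjoint. -/
noncomputable def DisjGraph (P : Set (ℝ × ℝ)) : SimpleGraph (SegOn P) where
  Adj a b := seg a.1 ∩ seg b.1 = ∅
  symm := ⟨by intro a b h; rwa [Set.inter_comm]⟩
  loopless := by
    refine ⟨?_⟩
    intro a h
    rw [Set.inter_self] at h
    exact (seg_nonempty a.1).ne_empty h

/-- Two (unordered pairs of points seen as) segments cross if they intersect
but share no endpoint. -/
def Crosses (s t : Sym2 (ℝ × ℝ)) : Prop :=
  (seg s ∩ seg t).Nonempty ∧ ∀ p, p ∈ s → p ∉ t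

/-- A colour class is a star if no two of its segments cross. -/
def IsStarClass {P : Set (ℝ × ℝ)} {α : Type} (γ : (DisjGraph P).Coloring α) (c : α) : Prop :=
  ∀ s t : SegOn P, γ s = c → γ t = c → ¬ Crosses s.1 t.1

/-- `v` is an apex of the colour class `c`: every segment of the class is incident with `v`. -/
def IsApex {P : Set (ℝ × ℝ)} {α : Type} (γ : (DisjGraph P).Coloring α) (c : α) (v : ℝ × ℝ) : Prop :=
  ∀ s : SegOn P, γ s = c → v ∈ s.1


/-- The Kneser graph `KG(n,2)`: vertices are the 2-element subsets of `Fin n`,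
adjacent iff disjoint. -/
def Kneser2 (n : ℕ) : SimpleGraph {s : Sym2 (Fin n) // ¬ s.IsDiag} where
  Adj a b := ∀ x, x ∈ a.1 → x ∉ b.1
  symm := ⟨fun a b h x hx hxa => h x hxa hx⟩
  loopless := by
    refine ⟨?_⟩
    rintro ⟨s, hs⟩ h
    induction s using Sym2.ind with
    | _ p q => exact h p (by simp) (by simp)

lemma sym2_exists_eq {α} (s : Sym2 α) : ∃ a b, s = s(a, b) := by
  induction s using Sym2.ind with
  | _ a b => exact ⟨a, b, rfl⟩

set_option maxHeartbeats 800000 in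
lemma pair_cover {α : Type*} (a b d p q : α) (hab : a ≠ b) (hda : d ≠ a) (hdb : d ≠ b)
    (hpq : p ≠ q)
    (h1 : p = a ∨ p = b ∨ q = a ∨ q = b)
    (h2 : p = b ∨ p = d ∨ q = b ∨ q = d)
    (h3 : p = a ∨ p = d ∨ q = a ∨ q = d) :
    s(p, q) = s(a, b) ∨ s(p, q) = s(b, d) ∨ s(p, q) = s(a, d) := by
  rw [Sym2.eq_iff, Sym2.eq_iff, Sym2.eq_iff]
  rcases h1 with h1 | h1 | h1 | h1 <;> rcases h2 with h2 | h2 | h2 | h2 <;>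
    rcases h3 with h3 | h3 | h3 | h3 <;> subst_vars <;> tauto

lemma same_color_meet {n m : ℕ} (γ : (Kneser2 n).Coloring (Fin m))
    (a b : {s : Sym2 (Fin n) // ¬ s.IsDiag}) (h : γ a = γ b) :
    ∃ x, x ∈ a.1 ∧ x ∈ b.1 := by
  have hna : ¬ ∀ x, x ∈ a.1 → x ∉ b.1 := by
    intro hadj
    by_cases hab : a = b
    · subst hab
      obtain ⟨p, q, hpq⟩ := sym2_exists_eq a.1
      exact hadj p (hpq ▸ by simp) (hpq ▸ by simp)
    · exact (γ.valid (show (Kneser2 n).Adj a b from hadj)) h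
  push_neg at hna
  obtain ⟨x, hx1, hx2⟩ := hna
  exact ⟨x, hx1, hx2⟩

lemma star_or_small {n m : ℕ} (hn : 1 ≤ n) (γ : (Kneser2 n).Coloring (Fin m)) (c : Fin m) :
    (∃ v, ∀ s, γ s = c → v ∈ s.1) ∨
    (Finset.univ.filter (fun s => γ s = c)).card ≤ 3 := by
  by_cases hstar : ∃ v, ∀ s, γ s = c → v ∈ s.1
  · exact Or.inl hstar
  right
  push_neg at hstar
  obtain ⟨s₁, hc₁, -⟩ := hstar ⟨0, hn⟩
  obtain ⟨a, b, h1eq⟩ := sym2_exists_eq s₁.1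
  have hab : a ≠ b := by
    have := s₁.2; rw [h1eq, Sym2.mk_isDiag_iff] at this; exact this
  obtain ⟨s₂, hc₂, ha₂⟩ := hstar a
  obtain ⟨x, hx1, hx2⟩ := same_color_meet γ s₁ s₂ (hc₁.trans hc₂.symm)
  rw [h1eq, Sym2.mem_iff] at hx1
  have hb2 : b ∈ s₂.1 := by
    rcases hx1 with rfl | rfl
    · exact absurd hx2 ha₂
    · exact hx2
  obtain ⟨p, q, h2eq'⟩ := sym2_exists_eq s₂.1
  have hbpq : b = p ∨ b = q := by rw [h2eq', Sym2.mem_iff] at hb2; exact hb2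
  obtain ⟨d, h2eq⟩ : ∃ d, s₂.1 = s(b, d) := by
    rcases hbpq with rfl | rfl
    · exact ⟨q, h2eq'⟩
    · exact ⟨p, h2eq'.trans (Sym2.eq_swap)⟩
  have hdb : d ≠ b := by
    have := s₂.2; rw [h2eq, Sym2.mk_isDiag_iff] at this
    exact fun h => this h.symm
  have hda : d ≠ a := by
    rintro rfl; exact ha₂ (h2eq ▸ by simp)
  obtain ⟨s₃, hc₃, hb₃⟩ := hstar b
  obtain ⟨y, hy1, hy3⟩ := same_color_meet γ s₁ s₃ (hc₁.trans hc₃.symm)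
  rw [h1eq, Sym2.mem_iff] at hy1
  have ha3 : a ∈ s₃.1 := by
    rcases hy1 with rfl | rfl
    · exact hy3
    · exact absurd hy3 hb₃
  obtain ⟨z, hz2, hz3⟩ := same_color_meet γ s₂ s₃ (hc₂.trans hc₃.symm)
  rw [h2eq, Sym2.mem_iff] at hz2
  have hd3 : d ∈ s₃.1 := by
    rcases hz2 with rfl | rfl
    · exact absurd hz3 hb₃
    · exact hz3
  have h3eq : s₃.1 = s(a, d) :=
    ((Sym2.mem_and_mem_iff (Ne.symm hda)).mp ⟨ha3, hd3⟩)
  have hsub : (Finset.univ.filter (fun s => γ s = c)) ⊆ {s₁, s₂, s₃} := by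
    intro s₄ hs₄
    rw [Finset.mem_filter] at hs₄
    have hc₄ := hs₄.2
    obtain ⟨p, q, h4eq⟩ := sym2_exists_eq s₄.1
    have hpq : p ≠ q := by
      have := s₄.2; rw [h4eq, Sym2.mk_isDiag_iff] at this; exact this
    obtain ⟨x1, hx11, hx14⟩ := same_color_meet γ s₁ s₄ (hc₁.trans hc₄.symm)
    obtain ⟨x2, hx22, hx24⟩ := same_color_meet γ s₂ s₄ (hc₂.trans hc₄.symm)
    obtain ⟨x3, hx33, hx34⟩ := same_color_meet γ s₃ s₄ (hc₃.trans hc₄.symm)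
    rw [h1eq, Sym2.mem_iff] at hx11
    rw [h2eq, Sym2.mem_iff] at hx22
    rw [h3eq, Sym2.mem_iff] at hx33
    rw [h4eq, Sym2.mem_iff] at hx14 hx24 hx34
    have h1 : p = a ∨ p = b ∨ q = a ∨ q = b := by
      rcases hx14 with rfl | rfl
      · exact hx11.imp id Or.inl
      · exact Or.inr (Or.inr hx11)
    have h2 : p = b ∨ p = d ∨ q = b ∨ q = d := by
      rcases hx24 with rfl | rfl
      · exact hx22.imp id Or.inl
      · exact Or.inr (Or.inr hx22)
    have h3 : p = a ∨ p = d ∨ q = a ∨ q = d := by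
      rcases hx34 with rfl | rfl
      · exact hx33.imp id Or.inl
      · exact Or.inr (Or.inr hx33)
    have key : s₄.1 = s₁.1 ∨ s₄.1 = s₂.1 ∨ s₄.1 = s₃.1 := by
      rw [h1eq, h2eq, h3eq, h4eq]
      exact pair_cover a b d p q hab hda hdb hpq h1 h2 h3
    simp only [Finset.mem_insert, Finset.mem_singleton]
    rcases key with h | h | h
    · exact Or.inl (Subtype.ext h)
    · exact Or.inr (Or.inl (Subtype.ext h))
    · exact Or.inr (Or.inr (Subtype.ext h))
  calc (Finset.univ.filter (fun s => γ s = c)).card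
      ≤ ({s₁, s₂, s₃} : Finset _).card := Finset.card_le_card hsub
    _ ≤ 3 := by
        refine (Finset.card_insert_le _ _).trans ?_
        have := Finset.card_insert_le s₂ ({s₃} : Finset _)
        simp only [Finset.card_singleton] at this ⊢
        omega

lemma kneser_not_colorable : ∀ n, 4 ≤ n → ¬ (Kneser2 n).Colorable (n - 3) := by
  intro n hn
  induction n, hn using Nat.le_induction with
  | base =>
    rintro ⟨γ⟩
    have hadj : (Kneser2 4).Adj ⟨s(0, 1), by decide⟩ ⟨s(2, 3), by decide⟩ := by
      intro x hx hx'
      rw [Sym2.mem_iff] at hx hx'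
      rcases hx with rfl | rfl <;> rcases hx' with h | h <;>
        exact absurd h (by decide)
    have hss : ∀ x y : Fin (4 - 3), x = y := by decide
    exact (γ.valid hadj) (hss _ _)
  | succ n hn ih =>
    rintro ⟨γ⟩
    by_cases hstar : ∃ c v, ∀ s, γ s = c → v ∈ s.1
    · -- a star class exists: delete its apex, color Kneser2 n with one fewer color
      obtain ⟨c, v, hc⟩ := hstar
      have hφd : ∀ s : {s : Sym2 (Fin n) // ¬ s.IsDiag},
          ¬ (Sym2.map v.succAbove s.1).IsDiag := by
        intro s h
        exact s.2 ((Sym2.isDiag_map (Fin.succAbove_right_injective)).mp h)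
      set φ : {s : Sym2 (Fin n) // ¬ s.IsDiag} → {s : Sym2 (Fin (n+1)) // ¬ s.IsDiag} :=
        fun s => ⟨Sym2.map v.succAbove s.1, hφd s⟩ with hφ
      have hne : ∀ s, γ (φ s) ≠ c := by
        intro s h
        have hv := hc (φ s) h
        rw [hφ] at hv
        simp only [Sym2.mem_map] at hv
        obtain ⟨y, -, hy⟩ := hv
        exact Fin.succAbove_ne v y hy
      have hadj : ∀ a b, (Kneser2 n).Adj a b → (Kneser2 (n+1)).Adj (φ a) (φ b) := by
        intro a b hab x hxa hxb
        simp only [hφ, Sym2.mem_map] at hxa hxb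
        obtain ⟨y, hya, hy⟩ := hxa
        obtain ⟨z, hzb, hz⟩ := hxb
        have : y = z := Fin.succAbove_right_injective (hy.trans hz.symm)
        exact hab y hya (this ▸ hzb)
      have γ' : (Kneser2 n).Coloring {d : Fin (n + 1 - 3) // d ≠ c} :=
        SimpleGraph.Coloring.mk (fun s => ⟨γ (φ s), hne s⟩)
          (fun {a b} h heq => (γ.valid (hadj a b h)) (by
            simpa [Subtype.ext_iff] using heq))
      have hcol := γ'.colorable
      have hcard : Fintype.card {d : Fin (n + 1 - 3) // d ≠ c} = n - 3 := by
        have := Fintype.card_subtype_compl (fun d : Fin (n + 1 - 3) => d = c)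
        rw [Fintype.card_subtype_eq, Fintype.card_fin] at this
        have h2 : (fun d : Fin (n + 1 - 3) => d ≠ c) = (fun d => ¬ d = c) := rfl
        calc Fintype.card {d : Fin (n + 1 - 3) // d ≠ c}
            = n + 1 - 3 - 1 := this
          _ = n - 3 := by omega
      rw [hcard] at hcol
      exact ih hcol
    · -- no star class: every class is a triangle, too few pairs
      push_neg at hstar
      have hsmall : ∀ c : Fin (n + 1 - 3),
          (Finset.univ.filter (fun s => γ s = c)).card ≤ 3 := by
        intro c
        rcases star_or_small (by omega) γ c with h | h
        · obtain ⟨v, hv⟩ := h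
          obtain ⟨s0, hs0c, hs0v⟩ := hstar c v
          exact absurd (hv s0 hs0c) hs0v
        · exact h
      have hcount : Fintype.card {s : Sym2 (Fin (n+1)) // ¬ s.IsDiag}
          ≤ 3 * (n + 1 - 3) := by
        rw [← Finset.card_univ,
          Finset.card_eq_sum_card_fiberwise (fun s _ => Finset.mem_univ (γ s))]
        calc ∑ c : Fin (n + 1 - 3), (Finset.univ.filter (fun s => γ s = c)).card
            ≤ ∑ _c : Fin (n + 1 - 3), 3 := Finset.sum_le_sum (fun c _ => hsmall c)
          _ = 3 * (n + 1 - 3) := by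
              rw [Finset.sum_const, Finset.card_univ, Fintype.card_fin]; ring
      have hcard : Fintype.card {s : Sym2 (Fin (n+1)) // ¬ s.IsDiag} = (n+1).choose 2 := by
        rw [Sym2.card_subtype_not_diag, Fintype.card_fin]
      rw [hcard, Nat.choose_two_right] at hcount
      have hmul : (n + 1) * (n + 1 - 1) = n * n + n := by
        simp; ring
      have heven : (n * n + n) % 2 = 0 := by
        have := Nat.even_mul_succ_self n
        rw [Nat.even_iff] at this
        have : n * (n + 1) = n * n + n := by ring
        omega
      have hbig : 6 * n < n * n + n + 12 := by
        rcases Nat.lt_or_ge n 5 with h5 | h5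
        · interval_cases n <;> norm_num
        · have : 5 * n ≤ n * n := Nat.mul_le_mul_right n h5
          omega
      rw [hmul] at hcount
      omega

lemma kneser_colorable (n : ℕ) (hn : 4 ≤ n) : (Kneser2 n).Colorable (n - 2) := by
  classical
  have hlt : n - 3 < n - 2 := by omega
  set colval : Sym2 (Fin n) → ℕ :=
    Sym2.lift ⟨fun p q => min p.1 q.1, fun p q => by simp [Nat.min_comm]⟩ with hcv
  refine ⟨SimpleGraph.Coloring.mk
    (fun s => (⟨min (colval s.1) (n - 3), lt_of_le_of_lt (min_le_right _ _) hlt⟩ : Fin (n-2)))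
    ?_⟩
  rintro ⟨sa, ha⟩ ⟨sb, hb⟩ hadj heq
  induction sa using Sym2.ind with
  | _ p q =>
  induction sb using Sym2.ind with
  | _ r t =>
  have hpq : p ≠ q := by rwa [Sym2.mk_isDiag_iff] at ha
  have hrt : r ≠ t := by rwa [Sym2.mk_isDiag_iff] at hb
  have hp : p ∉ s(r, t) := hadj p (by simp)
  have hq : q ∉ s(r, t) := hadj q (by simp)
  rw [Sym2.mem_iff] at hp hq
  push_neg at hp hq
  have hval : min (colval s(p, q)) (n - 3) = min (colval s(r, t)) (n - 3) := by
    simpa [Fin.ext_iff] using heq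
  have h1 : colval s(p, q) = min p.1 q.1 := by simp [hcv]
  have h2 : colval s(r, t) = min r.1 t.1 := by simp [hcv]
  rw [h1, h2] at hval
  have e1 : p.1 ≠ q.1 := fun h => hpq (Fin.val_injective h)
  have e2 : r.1 ≠ t.1 := fun h => hrt (Fin.val_injective h)
  have e3 : p.1 ≠ r.1 := fun h => hp.1 (Fin.val_injective h)
  have e4 : p.1 ≠ t.1 := fun h => hp.2 (Fin.val_injective h)
  have e5 : q.1 ≠ r.1 := fun h => hq.1 (Fin.val_injective h)
  have e6 : q.1 ≠ t.1 := fun h => hq.2 (Fin.val_injective h)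
  have := p.isLt; have := q.isLt; have := r.isLt; have := t.isLt
  omega


theorem stmt13 (n : ℕ) (hn : 4 ≤ n) :
    (Kneser2 n).chromaticNumber = ((n - 2 : ℕ) : ℕ∞) := by
  have h1 : (Kneser2 n).Colorable (n - 2) := kneser_colorable n hn
  have h2 : ¬ (Kneser2 n).Colorable (n - 3) := kneser_not_colorable n hn
  have hle : (Kneser2 n).chromaticNumber ≤ ((n - 2 : ℕ) : ℕ∞) := h1.chromaticNumber_le
  refine le_antisymm hle ?_
  by_contra hlt
  push_neg at hlt
  have hne : (Kneser2 n).chromaticNumber ≠ ⊤ :=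
    (hle.trans_lt (by exact_mod_cast ENat.coe_lt_top (n-2) : ((n-2:ℕ):ℕ∞) < ⊤)).ne
  lift (Kneser2 n).chromaticNumber to ℕ using hne with m hm
  have hmlt : m < n - 2 := by exact_mod_cast hlt
  have : (Kneser2 n).chromaticNumber ≤ ((n - 3 : ℕ) : ℕ∞) := by
    rw [← hm]
    exact_mod_cast Nat.cast_le.mpr (by omega : m ≤ n - 3)
  exact h2 (SimpleGraph.chromaticNumber_le_iff_colorable.mp this)
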